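/- For every α > 0 and θ > 2, there exists a square-summable coefficient array that satisfies both the condition B^{α/(1+2α)}_{2,∞} and the weak Besov condition W_{2/(1+2α)} but does not satisfy the condition A^α_θ. Consequently the intersection of the classes B^{α/(1+2α)}_{2,∞} and W_{2/(1+2α)} is not contained in the class A^α_θ. -/

import Mathlib

open scoped BigOperators

/-- A coefficient array `β` is square-summable if `Σ_{j,k} β_{j,k}² < ∞`. -/
def SqSummable (β : ℕ → ℕ → ℝ) : Prop :=
  Summable fun j : ℕ => ∑ k ∈ Finset.range (2 ^ j), (β j k) ^ 2

/-- The condition `B^{α/(1+2α)}_{2,∞}`. -/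
def CondB2 (β : ℕ → ℕ → ℝ) (α : ℝ) : Prop :=
  ∃ C : ℝ, ∀ J : ℕ,
    (2 : ℝ) ^ (2 * (J : ℝ) * α / (1 + 2 * α)) *
      ∑' j : ℕ, (if J ≤ j then ∑ k ∈ Finset.range (2 ^ j), (β j k) ^ 2 else 0) ≤ C

/-- The weak Besov condition `W_{2/(1+2α)}`. -/
def CondW (β : ℕ → ℕ → ℝ) (α : ℝ) : Prop :=
  ∃ C : ℝ, ∀ u : ℝ, 0 < u →
    {q : ℕ × ℕ | q.2 < 2 ^ q.1 ∧ u < |β q.1 q.2|}.Finite ∧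
      u ^ (2 / (1 + 2 * α)) *
        ({q : ℕ × ℕ | q.2 < 2 ^ q.1 ∧ u < |β q.1 q.2|}.ncard : ℝ) ≤ C

/-- `N(J,j) = min(⌊2^J (j−J+1)^{−θ}⌋, 2^j)`. -/
noncomputable def NJj (θ : ℝ) (J j : ℕ) : ℕ :=
  min ⌊(2 : ℝ) ^ J * ((j : ℝ) - (J : ℝ) + 1) ^ (-θ)⌋₊ (2 ^ j)

/-- `t_{j,J}(β)`: the minimum over subsets `A` of `{0,…,2^j−1}` of cardinality `N(J,j)`
of `Σ_{k ∉ A} β_{j,k}²`, i.e. the sum of squares of all but the `N(J,j)` largest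
`|β_{j,k}|` at level `j`. -/
noncomputable def tTail (β : ℕ → ℕ → ℝ) (θ : ℝ) (J j : ℕ) : ℝ :=
  sInf {x : ℝ | ∃ A : Finset ℕ, A ⊆ Finset.range (2 ^ j) ∧ A.card = NJj θ J j ∧
    x = ∑ k ∈ Finset.range (2 ^ j) \ A, (β j k) ^ 2}

/-- The condition `A^α_θ`. -/
def CondA (β : ℕ → ℕ → ℝ) (α θ : ℝ) : Prop :=
  ∃ C : ℝ, ∀ J : ℕ,
    (2 : ℝ) ^ (2 * (J : ℝ) * α) *
      ∑' j : ℕ, (if J ≤ j then tTail β θ J j else 0) ≤ C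

/-!
The witness puts the value `2^(-j/2)` on the first `m_j = ⌊2^(j/(1+2α))⌋` coefficients of
level `j` and `0` elsewhere. Level `j` then carries energy `m_j 2^(-j) ≤ 2^(-2αj/(1+2α))`, a
geometric sequence, which gives `B`. A coefficient exceeds `u` only on levels with
`2^(-j/2) > u`, and these carry at most `∑ 2^(j/(1+2α)) ≲ u^(-2/(1+2α))` nonzero coefficients,
which gives `W`. For `J ≈ j/(1+2α) + d` with `j - J ≥ 2^(d+3)`, the number `N(J,j)` of kept
coefficients is at most `m_j / 2`, so `t_{j,J} ≳ 2^(j/(1+2α) - j)` and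
`2^(2Jα) t_{j,J} ≳ 2^(2αd)`, which is unbounded in `d`.
-/

lemma half_le_natFloor {x : ℝ} (hx : 1 ≤ x) : x / 2 ≤ ⌊x⌋₊ := by
  have h1 : (1 : ℝ) ≤ ⌊x⌋₊ := by exact_mod_cast (Nat.one_le_floor_iff x).2 hx
  linarith [Nat.sub_one_lt_floor x]

lemma geom_sum_le_of_pow_le {q M : ℝ} (hq : 1 < q) (hM : 0 ≤ M) {L : ℕ}
    (h : ∀ j < L, q ^ j ≤ M) : ∑ j ∈ Finset.range L, q ^ j ≤ M * q / (q - 1) := by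
  have hq1 : 0 < q - 1 := sub_pos.2 hq
  cases L with
  | zero => simp only [Finset.range_zero, Finset.sum_empty]; positivity
  | succ n =>
    rw [geom_sum_eq hq.ne']
    gcongr
    calc q ^ (n + 1) - 1 ≤ q ^ n * q := by rw [pow_succ]; linarith
      _ ≤ M * q := by gcongr; exact h n n.lt_succ_self

lemma summable_ite_le {f : ℕ → ℝ} (hf : Summable f) (J : ℕ) :
    Summable fun j => if J ≤ j then f j else 0 :=
  (hf.indicator (Set.Ici J)).congr fun j => by simp [Set.indicator_apply]

lemma tsum_ite_le_eq_tsum_nat_add {f : ℕ → ℝ} (hf : Summable f) (J : ℕ) :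
    ∑' j, (if J ≤ j then f j else 0) = ∑' i, f (i + J) := by
  rw [← (summable_ite_le hf J).sum_add_tsum_nat_add J,
    Finset.sum_eq_zero fun i hi => if_neg (by simpa using hi), zero_add]
  simp

lemma tsum_ite_le_le_geometric {r : ℝ} (hr0 : 0 ≤ r) (hr1 : r < 1) {g : ℕ → ℝ}
    (hg0 : ∀ j, 0 ≤ g j) (hg : ∀ j, g j ≤ r ^ j) (J : ℕ) :
    ∑' j, (if J ≤ j then g j else 0) ≤ r ^ J * (1 - r)⁻¹ := by
  have hgeom := summable_geometric_of_lt_one hr0 hr1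
  have hgs : Summable g := .of_nonneg_of_le hg0 hg hgeom
  calc ∑' j, (if J ≤ j then g j else 0) = ∑' i, g (i + J) := tsum_ite_le_eq_tsum_nat_add hgs J
    _ ≤ ∑' i, r ^ i * r ^ J :=
      Summable.tsum_le_tsum (fun i => pow_add r i J ▸ hg (i + J))
        ((summable_nat_add_iff J).2 hgs) (hgeom.mul_right _)
    _ = r ^ J * (1 - r)⁻¹ := by rw [tsum_mul_right, tsum_geometric_of_lt_one hr0 hr1, mul_comm]

section Tail

variable (β : ℕ → ℕ → ℝ) (θ : ℝ) (J j : ℕ)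

lemma tTail_set_nonempty :
    {x : ℝ | ∃ A : Finset ℕ, A ⊆ Finset.range (2 ^ j) ∧ A.card = NJj θ J j ∧
      x = ∑ k ∈ Finset.range (2 ^ j) \ A, (β j k) ^ 2}.Nonempty :=
  ⟨_, Finset.range (NJj θ J j), Finset.range_subset_range.2 (min_le_right _ _),
    Finset.card_range _, rfl⟩

lemma tTail_nonneg : 0 ≤ tTail β θ J j := by
  refine le_csInf (tTail_set_nonempty β θ J j) ?_
  rintro _ ⟨A, -, -, rfl⟩
  exact Finset.sum_nonneg fun k _ => sq_nonneg _

lemma tTail_le_sum_sdiff {A : Finset ℕ} (hA : A ⊆ Finset.range (2 ^ j))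
    (hcard : A.card = NJj θ J j) :
    tTail β θ J j ≤ ∑ k ∈ Finset.range (2 ^ j) \ A, (β j k) ^ 2 := by
  refine csInf_le ⟨0, ?_⟩ ⟨A, hA, hcard, rfl⟩
  rintro _ ⟨B, -, -, rfl⟩
  exact Finset.sum_nonneg fun k _ => sq_nonneg _

lemma tTail_le_sum_sq : tTail β θ J j ≤ ∑ k ∈ Finset.range (2 ^ j), (β j k) ^ 2 :=
  (tTail_le_sum_sdiff β θ J j (Finset.range_subset_range.2 (min_le_right _ _))
    (Finset.card_range _)).trans
    (Finset.sum_le_sum_of_subset_of_nonneg Finset.sdiff_subset fun _ _ _ => sq_nonneg _)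

lemma card_sub_mul_le_tTail {S : Finset ℕ} (hS : S ⊆ Finset.range (2 ^ j)) {c : ℝ}
    (hc0 : 0 ≤ c) (hc : ∀ k ∈ S, c ≤ (β j k) ^ 2) :
    ((S.card : ℝ) - NJj θ J j) * c ≤ tTail β θ J j := by
  refine le_csInf (tTail_set_nonempty β θ J j) ?_
  rintro _ ⟨A, -, hcard, rfl⟩
  have hsdiff : (S.card : ℝ) ≤ (S \ A).card + A.card := by
    exact_mod_cast Finset.card_le_card_sdiff_add_card
  calc ((S.card : ℝ) - NJj θ J j) * c ≤ (S \ A).card * c := by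
        rw [← hcard]; gcongr; linarith
    _ = ∑ _k ∈ S \ A, c := by rw [Finset.sum_const, nsmul_eq_mul]
    _ ≤ ∑ k ∈ S \ A, (β j k) ^ 2 :=
      Finset.sum_le_sum fun k hk => hc k (Finset.sdiff_subset hk)
    _ ≤ ∑ k ∈ Finset.range (2 ^ j) \ A, (β j k) ^ 2 :=
      Finset.sum_le_sum_of_subset_of_nonneg (Finset.sdiff_subset_sdiff hS le_rfl)
        fun _ _ _ => sq_nonneg _

end Tail

lemma NJj_le_div {θ : ℝ} (hθ : 1 ≤ θ) {J j : ℕ} (hJj : J ≤ j) :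
    (NJj θ J j : ℝ) ≤ 2 ^ J / ((j : ℝ) - J + 1) := by
  have hgap : (1 : ℝ) ≤ (j : ℝ) - J + 1 := by
    have : (J : ℝ) ≤ j := by exact_mod_cast hJj
    linarith
  calc (NJj θ J j : ℝ) ≤ ⌊(2 : ℝ) ^ J * ((j : ℝ) - J + 1) ^ (-θ)⌋₊ :=
        Nat.cast_le.2 (min_le_left _ _)
    _ ≤ (2 : ℝ) ^ J * ((j : ℝ) - J + 1) ^ (-θ) := Nat.floor_le (by positivity)
    _ ≤ (2 : ℝ) ^ J * ((j : ℝ) - J + 1) ^ (-1 : ℝ) := by gcongr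
    _ = 2 ^ J / ((j : ℝ) - J + 1) := by rw [Real.rpow_neg_one, div_eq_mul_inv]

noncomputable def blockCount (α : ℝ) (j : ℕ) : ℕ :=
  ⌊(2 : ℝ) ^ ((j : ℝ) / (1 + 2 * α))⌋₊

noncomputable def blockArray (α : ℝ) (j k : ℕ) : ℝ :=
  if k < blockCount α j then (2 : ℝ) ^ (-(j : ℝ) / 2) else 0

section BlockArray

variable {α : ℝ}

lemma blockCount_le_rpow (j : ℕ) :
    (blockCount α j : ℝ) ≤ (2 : ℝ) ^ ((j : ℝ) / (1 + 2 * α)) :=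
  Nat.floor_le (by positivity)

lemma blockCount_le_two_pow (hα : 0 ≤ α) (j : ℕ) : blockCount α j ≤ 2 ^ j := by
  refine Nat.floor_le_of_le ?_
  calc (2 : ℝ) ^ ((j : ℝ) / (1 + 2 * α)) ≤ (2 : ℝ) ^ (j : ℝ) :=
        Real.rpow_le_rpow_of_exponent_le one_le_two (div_le_self j.cast_nonneg (by linarith))
    _ = ((2 ^ j : ℕ) : ℝ) := by rw [Real.rpow_natCast]; push_cast; rfl

lemma half_rpow_le_blockCount (hα : 0 ≤ α) (j : ℕ) :
    (2 : ℝ) ^ ((j : ℝ) / (1 + 2 * α)) / 2 ≤ blockCount α j :=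
  half_le_natFloor (Real.one_le_rpow one_le_two (by positivity))

lemma sq_blockArray {j k : ℕ} (hk : k < blockCount α j) :
    (blockArray α j k) ^ 2 = (2 : ℝ) ^ (-(j : ℝ)) := by
  rw [blockArray, if_pos hk, ← Real.rpow_natCast, ← Real.rpow_mul zero_le_two]
  norm_num

lemma sum_sq_blockArray (hα : 0 ≤ α) (j : ℕ) :
    ∑ k ∈ Finset.range (2 ^ j), (blockArray α j k) ^ 2 =
      blockCount α j * (2 : ℝ) ^ (-(j : ℝ)) := by
  rw [← Finset.sum_range_add_sum_Ico _ (blockCount_le_two_pow hα j),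
    Finset.sum_congr rfl fun k hk => sq_blockArray (Finset.mem_range.1 hk),
    Finset.sum_eq_zero (s := Finset.Ico _ _) fun k hk => ?_]
  · simp
  · simp [blockArray, (Finset.mem_Ico.1 hk).1.not_gt]

lemma sum_sq_blockArray_le (hα : 0 ≤ α) (j : ℕ) :
    ∑ k ∈ Finset.range (2 ^ j), (blockArray α j k) ^ 2 ≤
      ((2 : ℝ) ^ (-(2 * α / (1 + 2 * α)))) ^ j := by
  rw [sum_sq_blockArray hα, ← Real.rpow_mul_natCast zero_le_two]
  calc (blockCount α j : ℝ) * (2 : ℝ) ^ (-(j : ℝ))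
      ≤ (2 : ℝ) ^ ((j : ℝ) / (1 + 2 * α)) * (2 : ℝ) ^ (-(j : ℝ)) := by
        gcongr; exact blockCount_le_rpow j
    _ = (2 : ℝ) ^ (-(2 * α / (1 + 2 * α)) * j) := by
        rw [← Real.rpow_add two_pos]
        congr 1
        field_simp
        ring

lemma sqSummable_blockArray (hα : 0 < α) : SqSummable (blockArray α) :=
  .of_nonneg_of_le (fun _ => Finset.sum_nonneg fun _ _ => sq_nonneg _)
    (sum_sq_blockArray_le hα.le)
    (summable_geometric_of_lt_one (by positivity)
      (Real.rpow_lt_one_of_one_lt_of_neg one_lt_two (neg_lt_zero.2 (by positivity))))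

lemma condB2_blockArray (hα : 0 < α) : CondB2 (blockArray α) α := by
  set r := (2 : ℝ) ^ (-(2 * α / (1 + 2 * α)))
  have hr1 : r < 1 := Real.rpow_lt_one_of_one_lt_of_neg one_lt_two (neg_lt_zero.2 (by positivity))
  refine ⟨(1 - r)⁻¹, fun J => ?_⟩
  calc (2 : ℝ) ^ (2 * (J : ℝ) * α / (1 + 2 * α)) *
        ∑' j : ℕ,
          (if J ≤ j then ∑ k ∈ Finset.range (2 ^ j), (blockArray α j k) ^ 2 else 0)
      ≤ (2 : ℝ) ^ (2 * (J : ℝ) * α / (1 + 2 * α)) * (r ^ J * (1 - r)⁻¹) := by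
        gcongr
        exact tsum_ite_le_le_geometric (by positivity) hr1
          (fun _ => Finset.sum_nonneg fun _ _ => sq_nonneg _) (sum_sq_blockArray_le hα.le) J
    _ = (1 - r)⁻¹ := by
        rw [← mul_assoc, ← Real.rpow_mul_natCast zero_le_two, ← Real.rpow_add two_pos,
          show 2 * (J : ℝ) * α / (1 + 2 * α) + -(2 * α / (1 + 2 * α)) * J = 0 by ring,
          Real.rpow_zero, one_mul]

lemma lt_abs_blockArray_iff {u : ℝ} (hu : 0 ≤ u) {j k : ℕ} :
    u < |blockArray α j k| ↔ k < blockCount α j ∧ u < (2 : ℝ) ^ (-(j : ℝ) / 2) := by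
  unfold blockArray
  split_ifs with hk
  · simp [hk, abs_of_pos (Real.rpow_pos_of_pos two_pos _)]
  · simp [hk, hu.not_gt]

lemma lt_two_rpow_neg_half_iff {u : ℝ} (hu : 0 < u) (j : ℕ) :
    u < (2 : ℝ) ^ (-(j : ℝ) / 2) ↔ j < ⌈-2 * Real.logb 2 u⌉₊ := by
  rw [Nat.lt_ceil, ← Real.logb_lt_iff_lt_rpow one_lt_two hu]
  constructor <;> intro h <;> linarith

lemma two_rpow_pow_le_of_lt (hα : 0 ≤ α) {u : ℝ} (hu : 0 < u) {j : ℕ}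
    (h : u < (2 : ℝ) ^ (-(j : ℝ) / 2)) :
    ((2 : ℝ) ^ (1 / (1 + 2 * α))) ^ j ≤ u ^ (-(2 / (1 + 2 * α))) := by
  calc ((2 : ℝ) ^ (1 / (1 + 2 * α))) ^ j
      = ((2 : ℝ) ^ (-(j : ℝ) / 2)) ^ (-(2 / (1 + 2 * α))) := by
        rw [← Real.rpow_mul_natCast zero_le_two, ← Real.rpow_mul zero_le_two]
        congr 1
        field_simp
    _ ≤ u ^ (-(2 / (1 + 2 * α))) :=
        Real.rpow_le_rpow_of_nonpos hu h.le (neg_nonpos.2 (by positivity))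

lemma ncard_lt_abs_blockArray_le (hα : 0 ≤ α) {u : ℝ} (hu : 0 < u) :
    {q : ℕ × ℕ | q.2 < 2 ^ q.1 ∧ u < |blockArray α q.1 q.2|}.Finite ∧
      ({q : ℕ × ℕ | q.2 < 2 ^ q.1 ∧ u < |blockArray α q.1 q.2|}.ncard : ℝ) ≤
        u ^ (-(2 / (1 + 2 * α))) * (2 : ℝ) ^ (1 / (1 + 2 * α)) /
          ((2 : ℝ) ^ (1 / (1 + 2 * α)) - 1) := by
  set L := ⌈-2 * Real.logb 2 u⌉₊
  set F : Finset (ℕ × ℕ) :=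
    (Finset.range L).biUnion fun j => {j} ×ˢ Finset.range (blockCount α j)
  have hsub : {q : ℕ × ℕ | q.2 < 2 ^ q.1 ∧ u < |blockArray α q.1 q.2|} ⊆ F := by
    rintro ⟨j, k⟩ ⟨-, h⟩
    obtain ⟨hk, hj⟩ := (lt_abs_blockArray_iff hu.le).1 h
    have hjL : j < L := (lt_two_rpow_neg_half_iff hu j).1 hj
    simp [F, hjL, hk]
  refine ⟨F.finite_toSet.subset hsub, ?_⟩
  calc ({q : ℕ × ℕ | q.2 < 2 ^ q.1 ∧ u < |blockArray α q.1 q.2|}.ncard : ℝ)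
      ≤ F.card := by
        exact_mod_cast (Set.ncard_le_ncard hsub F.finite_toSet).trans_eq (Set.ncard_coe_finset F)
    _ ≤ ∑ j ∈ Finset.range L, (blockCount α j : ℝ) := by
        exact_mod_cast Finset.card_biUnion_le.trans_eq (by simp)
    _ ≤ ∑ j ∈ Finset.range L, ((2 : ℝ) ^ (1 / (1 + 2 * α))) ^ j :=
        Finset.sum_le_sum fun j _ => (blockCount_le_rpow j).trans_eq (by
          rw [← Real.rpow_mul_natCast zero_le_two]; ring_nf)
    _ ≤ _ :=
        geom_sum_le_of_pow_le (Real.one_lt_rpow one_lt_two (by positivity)) (by positivity)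
          fun j hj => two_rpow_pow_le_of_lt hα hu ((lt_two_rpow_neg_half_iff hu j).2 hj)

lemma condW_blockArray (hα : 0 ≤ α) : CondW (blockArray α) α := by
  set q := (2 : ℝ) ^ (1 / (1 + 2 * α))
  refine ⟨q / (q - 1), fun u hu => ⟨(ncard_lt_abs_blockArray_le hα hu).1, ?_⟩⟩
  have hq : 1 < q := Real.one_lt_rpow one_lt_two (by positivity)
  calc u ^ (2 / (1 + 2 * α)) *
        ({q : ℕ × ℕ | q.2 < 2 ^ q.1 ∧ u < |blockArray α q.1 q.2|}.ncard : ℝ)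
      ≤ u ^ (2 / (1 + 2 * α)) * (u ^ (-(2 / (1 + 2 * α))) * q / (q - 1)) := by
        gcongr
        exact (ncard_lt_abs_blockArray_le hα hu).2
    _ = q / (q - 1) := by
        rw [Real.rpow_neg hu.le, ← mul_div_assoc, ← mul_assoc,
          mul_inv_cancel₀ (Real.rpow_pos_of_pos hu _).ne', one_mul]

lemma sub_mul_le_tTail_blockArray (hα : 0 ≤ α) (θ : ℝ) (J j : ℕ) :
    ((blockCount α j : ℝ) - NJj θ J j) * (2 : ℝ) ^ (-(j : ℝ)) ≤
      tTail (blockArray α) θ J j := by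
  simpa using card_sub_mul_le_tTail (blockArray α) θ J j
    (Finset.range_subset_range.2 (blockCount_le_two_pow hα j)) (by positivity)
    fun k hk => (sq_blockArray (Finset.mem_range.1 hk)).ge

lemma exists_levels_gap (hα : 0 < α) (d : ℕ) : ∃ J j : ℕ,
    (j : ℝ) / (1 + 2 * α) + d ≤ J ∧ (J : ℝ) < (j : ℝ) / (1 + 2 * α) + d + 1 ∧
      (2 : ℝ) ^ ((d : ℝ) + 3) ≤ (j : ℝ) - J + 1 := by
  obtain ⟨j, hj⟩ :=
    exists_nat_ge (((d : ℝ) + 2 ^ ((d : ℝ) + 3)) * ((1 + 2 * α) / (2 * α)))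
  have hceil := Nat.ceil_lt_add_one (by positivity : (0 : ℝ) ≤ (j : ℝ) / (1 + 2 * α))
  have hgap : (d : ℝ) + 2 ^ ((d : ℝ) + 3) ≤ (j : ℝ) - j / (1 + 2 * α) := by
    have hsplit : (j : ℝ) - j / (1 + 2 * α) = j / ((1 + 2 * α) / (2 * α)) := by
      field_simp
      ring
    rw [hsplit]
    exact (le_div_iff₀ (by positivity)).2 hj
  refine ⟨⌈(j : ℝ) / (1 + 2 * α)⌉₊ + d, j, ?_, ?_, ?_⟩ <;> push_cast
  · linarith [Nat.le_ceil ((j : ℝ) / (1 + 2 * α))]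
  · linarith
  · linarith

lemma exists_tTail_blockArray_ge {θ : ℝ} (hα : 0 < α) (hθ : 1 ≤ θ) (d : ℕ) :
    ∃ J j : ℕ, J ≤ j ∧
      (2 : ℝ) ^ (2 * α * d) / 4 ≤
        (2 : ℝ) ^ (2 * (J : ℝ) * α) * tTail (blockArray α) θ J j := by
  obtain ⟨J, j, hJlo, hJhi, hgap⟩ := exists_levels_gap hα d
  set x := (j : ℝ) / (1 + 2 * α) with hx
  have hJj : J ≤ j := by
    have : (1 : ℝ) ≤ 2 ^ ((d : ℝ) + 3) := Real.one_le_rpow one_le_two (by positivity)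
    exact_mod_cast (by linarith : (J : ℝ) ≤ j)
  have hN : (NJj θ J j : ℝ) ≤ 2 ^ x / 4 :=
    calc (NJj θ J j : ℝ) ≤ 2 ^ J / ((j : ℝ) - J + 1) := NJj_le_div hθ hJj
      _ ≤ 2 ^ (J : ℝ) / 2 ^ ((d : ℝ) + 3) := by rw [Real.rpow_natCast]; gcongr
      _ = 2 ^ ((J : ℝ) - (d + 3)) := (Real.rpow_sub two_pos _ _).symm
      _ ≤ 2 ^ (x - 2) := Real.rpow_le_rpow_of_exponent_le one_le_two (by linarith)
      _ = 2 ^ x / 4 := by rw [Real.rpow_sub two_pos]; norm_num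
  have htail : 2 ^ x / 4 * 2 ^ (-(j : ℝ)) ≤ tTail (blockArray α) θ J j := by
    refine le_trans ?_ (sub_mul_le_tTail_blockArray hα.le θ J j)
    gcongr
    linarith [half_rpow_le_blockCount hα.le j]
  have hexp : 2 * α * d ≤ 2 * (J : ℝ) * α + x - j := by
    have hxj : x * (1 + 2 * α) = j := by rw [hx]; field_simp
    nlinarith
  refine ⟨J, j, hJj, ?_⟩
  calc (2 : ℝ) ^ (2 * α * d) / 4 ≤ 2 ^ (2 * (J : ℝ) * α + x - j) / 4 := by
        gcongr
        exact one_le_two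
    _ = 2 ^ (2 * (J : ℝ) * α) * (2 ^ x / 4 * 2 ^ (-(j : ℝ))) := by
        rw [sub_eq_add_neg, Real.rpow_add two_pos, Real.rpow_add two_pos]
        ring
    _ ≤ 2 ^ (2 * (J : ℝ) * α) * tTail (blockArray α) θ J j := by gcongr

lemma not_condA_blockArray {θ : ℝ} (hα : 0 < α) (hθ : 1 ≤ θ) :
    ¬ CondA (blockArray α) α θ := by
  rintro ⟨C, hC⟩
  obtain ⟨d, hd⟩ : ∃ d : ℕ, 4 * C < (2 : ℝ) ^ (2 * α * d) := by
    obtain ⟨d, hd⟩ := pow_unbounded_of_one_lt (4 * C)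
      (Real.one_lt_rpow one_lt_two (by positivity) : (1 : ℝ) < 2 ^ (2 * α))
    exact ⟨d, by rwa [Real.rpow_mul_natCast zero_le_two]⟩
  obtain ⟨J, j, hJj, hlarge⟩ := exists_tTail_blockArray_ge hα hθ d
  have hsum : Summable fun i => tTail (blockArray α) θ J i :=
    .of_nonneg_of_le (tTail_nonneg _ θ J) (tTail_le_sum_sq _ θ J) (sqSummable_blockArray hα)
  have hle : tTail (blockArray α) θ J j ≤
      ∑' i : ℕ, (if J ≤ i then tTail (blockArray α) θ J i else 0) := by
    simpa [hJj] using (summable_ite_le hsum J).le_tsum j fun i _ => by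
      split_ifs
      exacts [tTail_nonneg _ θ J i, le_rfl]
  have hCJ := (mul_le_mul_of_nonneg_left hle (by positivity)).trans (hC J)
  linarith

end BlockArray

/-- the non-embedding `B^{α/(1+2α)}_{2,∞} ∩ W_{2/(1+2α)} ⊄ A^α_θ`. -/
theorem stmt_18 (α θ : ℝ) (hα : 0 < α) (hθ : 2 < θ) :
    (∃ β : ℕ → ℕ → ℝ, SqSummable β ∧ CondB2 β α ∧ CondW β α ∧ ¬ CondA β α θ) ∧
      ¬ (∀ β : ℕ → ℕ → ℝ, SqSummable β → CondB2 β α → CondW β α → CondA β α θ) := by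
  have hβ : ∃ β : ℕ → ℕ → ℝ, SqSummable β ∧ CondB2 β α ∧ CondW β α ∧ ¬ CondA β α θ :=
    ⟨blockArray α, sqSummable_blockArray hα, condB2_blockArray hα, condW_blockArray hα.le,
      not_condA_blockArray hα (by linarith)⟩
  refine ⟨hβ, fun h => ?_⟩
  obtain ⟨β, hsq, hB, hW, hA⟩ := hβ
  exact hA (h β hsq hB hW)
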